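/- Let n be a positive integer, let D be a convex digraph of order n, and let T be an antidirected caterpillar. Then D contains at least a(D) − (|T⁺| − 1)·|D⁻| − (|T⁻| − 1)·|D⁺| arcs that are good for T. -/

import Mathlib

open Finset

section Defs

variable {V W : Type*}

/-- Number of arcs of a digraph given by a Boolean adjacency relation. -/
def arcCount [Fintype V] (A : V → V → Bool) : ℕ :=
  ((univ : Finset (V × V)).filter (fun p => A p.1 p.2)).card

/-- Out-neighbourhood. -/
def outNbr [Fintype V] (A : V → V → Bool) (a : V) : Finset V :=
  univ.filter (fun v => A a v)

/-- In-neighbourhood. -/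
def inNbr [Fintype V] (A : V → V → Bool) (a : V) : Finset V :=
  univ.filter (fun v => A v a)

/-- Neighbourhood with a sign: `true` = out, `false` = in. -/
def nbr [Fintype V] (A : V → V → Bool) (sign : Bool) (a : V) : Finset V :=
  if sign then outNbr A a else inNbr A a

/-- Total degree (out-degree plus in-degree). -/
def totalDeg [Fintype V] (A : V → V → Bool) (a : V) : ℕ :=
  (outNbr A a).card + (inNbr A a).card

/-- Maximum total degree `Δ`. -/
def maxDeg [Fintype V] (A : V → V → Bool) : ℕ :=
  univ.sup (totalDeg A)

/-- Second largest element `Δ₂` of the multiset of total degrees. -/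
def secondMaxDeg [Fintype V] (A : V → V → Bool) : ℕ :=
  (((univ : Finset V).val.map (totalDeg A)).erase (maxDeg A)).sup

/-- Loopless digraph. -/
def Loopless (A : V → V → Bool) : Prop := ∀ v, ¬ A v v

/-- Antidirected digraph: no directed path with two arcs. -/
def Antidirected (A : V → V → Bool) : Prop := ∀ x y z, A x y → A y z → False

/-- The underlying (undirected) simple graph of a digraph. -/
def underG (A : V → V → Bool) : SimpleGraph V :=
  SimpleGraph.fromRel (fun x y => A x y)

/-- `𝒦_{2,s}`-freeness: no two distinct vertices `a`, `b` together with signs and `s`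
distinct vertices (all different from `a` and `b`) lying in both signed neighbourhoods. -/
def K2sFree [Fintype V] [DecidableEq V] (A : V → V → Bool) (s : ℕ) : Prop :=
  ¬ ∃ (a b : V) (sa sb : Bool) (S : Finset V), a ≠ b ∧ S.card = s ∧
      a ∉ S ∧ b ∉ S ∧ S ⊆ nbr A sa a ∩ nbr A sb b

/-- `T` embeds in `A`: there is an injective arc-preserving map. -/
def Embeds (T : W → W → Bool) (A : V → V → Bool) : Prop :=
  ∃ f : W → V, Function.Injective f ∧ ∀ x y, T x y → A (f x) (f y)

/-- Vertices of positive out-degree. -/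
def outVerts [Fintype V] (A : V → V → Bool) : Finset V :=
  univ.filter (fun v => (outNbr A v).card ≠ 0)

/-- Vertices of positive in-degree. -/
def inVerts [Fintype V] (A : V → V → Bool) : Finset V :=
  univ.filter (fun v => (inNbr A v).card ≠ 0)

/-- A caterpillar: a tree with a path such that every vertex is on the path
or adjacent to it. -/
def IsCaterpillarG {X : Type*} (G : SimpleGraph X) : Prop :=
  G.IsTree ∧ ∃ (x y : X) (P : G.Walk x y), P.IsPath ∧
    ∀ v, v ∈ P.support ∨ ∃ w ∈ P.support, G.Adj v w

/-- Minimum pseudo-semidegree at least `m`: at least one arc, and every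
out-degree and in-degree is `0` or at least `m`. -/
def MinPseudoSemidegGe [Fintype V] (A : V → V → Bool) (m : ℕ) : Prop :=
  0 < arcCount A ∧ (∀ v, (outNbr A v).card = 0 ∨ m ≤ (outNbr A v).card) ∧
    (∀ v, (inNbr A v).card = 0 ∨ m ≤ (inNbr A v).card)

/-- `D'` is a subdigraph of `D` with vertex set `S`. -/
def SubdigraphOn (D : V → V → Bool) (S : Finset V) (D' : V → V → Bool) : Prop :=
  ∀ x y, D' x y → D x y ∧ x ∈ S ∧ y ∈ S

/-- The vertex set of the double broom `B_{uv}(T)`: the path joining `u` and `v`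
together with all neighbours of `u` and all neighbours of `v`. -/
def broomSet [Fintype W] [DecidableEq W] (T : W → W → Bool) {u v : W}
    (p : (underG T).Walk u v) : Finset W :=
  p.support.toFinset ∪ (outNbr T u ∪ inNbr T u) ∪ (outNbr T v ∪ inNbr T v)

/-- `z` lies strictly after `x` and strictly before `y` in clockwise (cyclic) order
on `Fin n`. -/
def cycBetween {n : ℕ} (x y z : Fin n) : Prop :=
  if x < y then x < z ∧ z < y else x < z ∨ z < y

/-- An arc `pq` of the convex digraph `A` on `Fin n` is good for the antidirected
caterpillar `T` with final vertex `u`, its spine neighbour `v`, and spine with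
`plen` edges (so `plen + 1` spine vertices). -/
def GoodArc {n : ℕ} (A : Fin n → Fin n → Bool) (T : W → W → Bool)
    (u v : W) (plen : ℕ) (pq : Fin n × Fin n) : Prop :=
  ∃ f : W → Fin n, Function.Injective f ∧ (∀ x y, T x y → A (f x) (f y)) ∧
    ((T v u = true ∧ (f v, f u) = pq) ∨ (T u v = true ∧ (f u, f v) = pq)) ∧
    (∀ z : Fin n,
      (plen % 2 = 0 → cycBetween (f u) (f v) z → z ∉ Set.range f) ∧
      (plen % 2 = 1 → z ≠ f u → z ≠ f v → ¬ cycBetween (f u) (f v) z →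
        z ∉ Set.range f))

/-- Number of edges of a bipartite graph with parts `α`, `β`. -/
def bipArcCount {α β : Type*} [Fintype α] [Fintype β] (E : α → β → Bool) : ℕ :=
  ((univ : Finset (α × β)).filter (fun p => E p.1 p.2)).card

/-- Degree of a vertex of the `α` part. -/
def bipDegA {α β : Type*} [Fintype β] (E : α → β → Bool) (a : α) : ℕ :=
  (univ.filter (fun b => E a b)).card

/-- Degree of a vertex of the `β` part. -/
def bipDegB {α β : Type*} [Fintype α] (E : α → β → Bool) (b : β) : ℕ :=
  (univ.filter (fun a => E a b)).card

end Defs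

/-!
Induction on the spine. Delete the final vertex `u` together with the leaves of its spine
neighbour `v`; reversing every arc if necessary, `v` is an out-vertex. Fix an out-vertex `x` of
`D` and rank its out-neighbours by clockwise distance from `x`, reversed when the smaller spine
has an odd number of edges. If `x z` is good for the smaller caterpillar and `y` is ranked below
`z` with at least `ℓ` out-neighbours of `x` ranked strictly between `y` and `z` (`ℓ` the number
of leaves of `v`), then `x y` is good for `T`: send `u` to `y` and the leaves of `v` to those
out-neighbours, which the region condition on `x z` keeps away from the old embedding. So at
each out-vertex of `D` at most `ℓ + 1` good arcs are lost, while `|T⁻|` grows by exactly `ℓ + 1`.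
-/

section Counting

variable {α β : Type*} [DecidableEq α] [LinearOrder β]

lemma card_le_card_add_of_forall_between {N G' G : Finset α} {κ : α → β}
    (hκ : Set.InjOn κ N) (hG'N : G' ⊆ N) (m : ℕ)
    (hG : ∀ z ∈ G', ∀ y ∈ N, κ y < κ z →
      m ≤ #{s ∈ N | κ y < κ s ∧ κ s < κ z} → y ∈ G) :
    #G' ≤ #G + (m + 1) := by
  obtain rfl | hG'ne := G'.eq_empty_or_nonempty
  · simp
  obtain ⟨z, hz, hzmax⟩ := G'.exists_max_image κ hG'ne
  set bad := {y ∈ N | κ y < κ z ∧ y ∉ G}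
  have hbad : #bad ≤ m := by
    obtain hempty | hbad_ne := bad.eq_empty_or_nonempty
    · simp [hempty]
    -- the lowest bad element sees all the other bad elements between itself and `z`
    obtain ⟨y, hy, hymin⟩ := bad.exists_min_image κ hbad_ne
    have hsub : bad.erase y ⊆ {s ∈ N | κ y < κ s ∧ κ s < κ z} := by
      intro s hs
      obtain ⟨hsy, hs⟩ := mem_erase.1 hs
      have hsN := (mem_filter.1 hs).1
      refine mem_filter.2 ⟨hsN, lt_of_le_of_ne (hymin s hs) ?_, (mem_filter.1 hs).2.1⟩
      exact hκ.ne (mem_filter.1 hy).1 hsN (Ne.symm hsy)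
    have := card_le_card hsub
    rw [card_erase_of_mem hy] at this
    simp only [bad, mem_filter] at hy
    by_contra
    exact hy.2.2 (hG z hz y hy.1 hy.2.1 (by omega))
  have hsub : G' ⊆ insert z (bad ∪ G) := by
    intro y hy
    rcases (hzmax y hy).lt_or_eq with hlt | heq
    · by_cases hyG : y ∈ G
      · simp [hyG]
      · simp [bad, hG'N hy, hlt, hyG]
    · simp [hκ (hG'N hy) (hG'N hz) heq]
  calc #G' ≤ #(insert z (bad ∪ G)) := card_le_card hsub
    _ ≤ #bad + #G + 1 := (card_insert_le _ _).trans (by gcongr; exact card_union_le _ _)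
    _ ≤ #G + (m + 1) := by omega

end Counting

section Update

open Function

lemma Set.InjOn.update_Iic_succ {α : Type*} {g : ℕ → α} {k : ℕ} {y : α}
    (hg : Set.InjOn g (Set.Iic k)) (hy : ∀ i ≤ k, g i ≠ y) :
    Set.InjOn (update g (k + 1) y) (Set.Iic (k + 1)) := by
  intro i hi j hj hij
  simp only [Set.mem_Iic] at hi hj
  rcases Nat.le_succ_iff.1 hi with hi | rfl <;> rcases Nat.le_succ_iff.1 hj with hj | rfl
  · rw [update_of_ne (by omega), update_of_ne (by omega)] at hij
    exact hg hi hj hij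
  · rw [update_of_ne (by omega), update_self] at hij
    exact absurd hij (hy i hi)
  · rw [update_self, update_of_ne (by omega)] at hij
    exact absurd hij.symm (hy j hj)
  · rfl

lemma Set.PairwiseDisjoint.update_Iic_succ {α : Type*} {L : ℕ → Finset α} {k : ℕ}
    {S : Finset α} (hL : (Set.Iic k).PairwiseDisjoint L) (hS : ∀ i < k, Disjoint (L i) S) :
    (Set.Iic (k + 1)).PairwiseDisjoint (update (update L k S) (k + 1) ∅) := by
  intro i hi j hj hij
  wlog hlt : i < j generalizing i j
  · exact (this hj hi hij.symm (by omega)).symm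
  simp only [Set.mem_Iic] at hi hj
  rcases Nat.lt_trichotomy j k with hjk | rfl | hjk
  · simpa [onFun, update_of_ne (show i ≠ k by omega), update_of_ne (show i ≠ k + 1 by omega),
      update_of_ne hjk.ne, update_of_ne (show j ≠ k + 1 by omega)] using
      hL (by simp; omega) (by simp; omega) hij
  · simpa [onFun, update_of_ne hlt.ne, update_of_ne (show i ≠ j + 1 by omega)] using hS i hlt
  · obtain rfl : j = k + 1 := by omega
    simp [onFun]

end Update

section Digraph

variable {V : Type*} [Fintype V] {A : V → V → Bool} {x y : V}

@[simp] lemma mem_outNbr : y ∈ outNbr A x ↔ A x y := by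
  simp [outNbr]

lemma outNbr_eq_empty (hx : x ∉ outVerts A) : outNbr A x = ∅ := by
  simpa [outVerts] using hx

lemma mem_outVerts_iff : x ∈ outVerts A ↔ ∃ y, A x y := by
  simp [outVerts, outNbr, Finset.eq_empty_iff_forall_notMem]

lemma mem_inVerts_iff : x ∈ inVerts A ↔ ∃ y, A y x := by
  simp [inVerts, inNbr, Finset.eq_empty_iff_forall_notMem]

lemma arcCount_flip (A : V → V → Bool) : arcCount (flip A) = arcCount A := by
  unfold arcCount
  refine card_equiv (Equiv.prodComm V V) fun p ↦ ?_
  simp only [mem_filter, mem_univ, true_and, Equiv.prodComm_apply, Prod.fst_swap, Prod.snd_swap]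
  rfl

lemma underG_adj_iff {W : Type*} {T : W → W → Bool} {x y : W} :
    (underG T).Adj x y ↔ x ≠ y ∧ (T x y ∨ T y x) :=
  SimpleGraph.fromRel_adj ..

lemma Antidirected.apply_iff_mem_outVerts (hA : Antidirected A) (hxy : (underG A).Adj x y) :
    A x y ↔ x ∈ outVerts A := by
  refine ⟨fun h ↦ mem_outVerts_iff.2 ⟨y, h⟩, fun hx ↦ ?_⟩
  obtain ⟨z, hz⟩ := mem_outVerts_iff.1 hx
  exact (underG_adj_iff.1 hxy).2.resolve_right fun h ↦ hA y x z h hz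

lemma Antidirected.mem_outVerts_iff_notMem (hA : Antidirected A) (hxy : (underG A).Adj x y) :
    x ∈ outVerts A ↔ y ∉ outVerts A := by
  rw [← hA.apply_iff_mem_outVerts hxy, ← hA.apply_iff_mem_outVerts hxy.symm]
  have hor := (underG_adj_iff.1 hxy).2
  have hnot : ¬ (A x y ∧ A y x) := fun h ↦ hA x y x h.1 h.2
  revert hor hnot
  cases A x y <;> cases A y x <;> simp

lemma Antidirected.mem_inVerts_iff_notMem (hA : Antidirected A) (hxy : (underG A).Adj x y) :
    x ∈ inVerts A ↔ x ∉ outVerts A := by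
  rw [hA.mem_outVerts_iff_notMem hxy, not_not, ← hA.apply_iff_mem_outVerts hxy.symm]
  refine ⟨fun hx ↦ ?_, fun h ↦ mem_inVerts_iff.2 ⟨y, h⟩⟩
  obtain ⟨z, hz⟩ := mem_inVerts_iff.1 hx
  exact (underG_adj_iff.1 hxy).2.resolve_left fun h ↦ hA z x y hz h

end Digraph

namespace SimpleGraph

variable {V : Type*} {G : SimpleGraph V}

lemma IsAcyclic.eq_of_adj_of_notMem_support (hG : G.IsAcyclic) {x a z : V} (ha : G.Adj x a)
    (hz : G.Adj x z) (q : G.Walk a z) (hx : x ∉ q.support) : z = a := by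
  classical
  have hx' : x ∉ q.bypass.support := fun h ↦ hx (q.support_bypass_subset_support h)
  have hp : (Walk.cons ha.symm Walk.nil : G.Walk a x).IsPath := by simp [ha.ne']
  have := hG.mem_support_of_ne_mem_support_of_adj_of_isPath hp q.bypass_isPath hz hx'
  simpa [hz.ne'] using this

lemma Walk.exists_walk_support_subset {u v a b : V} (P : G.Walk u v) (ha : a ∈ P.support)
    (hb : b ∈ P.support) : ∃ q : G.Walk a b, q.support ⊆ P.support := by
  classical
  refine ⟨(P.takeUntil a ha).reverse.append (P.takeUntil b hb), fun x hx ↦ ?_⟩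
  rw [Walk.mem_support_append_iff, Walk.support_reverse, List.mem_reverse] at hx
  exact hx.elim (fun h ↦ P.support_takeUntil_subset_support ha h)
    (fun h ↦ P.support_takeUntil_subset_support hb h)

lemma IsAcyclic.eq_add_one_of_adj_getVert (hG : G.IsAcyclic) {u v : V} {P : G.Walk u v}
    (hP : P.IsPath) {i j : ℕ} (hij : i < j) (hj : j ≤ P.length)
    (hadj : G.Adj (P.getVert i) (P.getVert j)) : j = i + 1 := by
  have hmem : P.getVert j ∈ (P.drop i).support := by
    simpa [Walk.drop_getVert, Nat.add_sub_cancel' hij.le] using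
      (P.drop i).getVert_mem_support (j - i)
  have h := hG.eq_snd_of_adj_start (hP.drop i) hadj hmem
  rw [Walk.snd, Walk.drop_getVert] at h
  exact hP.getVert_injOn (Set.mem_ofPred.2 hj) (Set.mem_ofPred.2 (by omega)) h

section Spine

variable {u v : V} {P : G.Walk u v}

lemma IsAcyclic.eq_of_adj_of_notMem_support_of_mem_support (hG : G.IsAcyclic)
    (hcat : ∀ x, x ∈ P.support ∨ ∃ y ∈ P.support, G.Adj x y) {x y z : V}
    (hx : x ∉ P.support) (hy : y ∈ P.support) (hxy : G.Adj x y) (hxz : G.Adj x z) : z = y := by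
  by_cases hz : z ∈ P.support
  · obtain ⟨q, hq⟩ := P.exists_walk_support_subset hy hz
    exact hG.eq_of_adj_of_notMem_support hxy hxz q (fun h ↦ hx (hq h))
  · obtain ⟨y', hy', hzy'⟩ := (hcat z).resolve_left hz
    obtain ⟨q, hq⟩ := P.exists_walk_support_subset hy hy'
    refine hG.eq_of_adj_of_notMem_support hxy hxz (q.concat hzy'.symm) fun h ↦ ?_
    rw [Walk.support_concat, List.mem_append, List.mem_singleton] at h
    exact h.elim (fun h ↦ hx (hq h)) hxz.ne

structure IsSpineAnchor (P : G.Walk u v) (home : V → ℕ) : Prop where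
  le_length : ∀ x, home x ≤ P.length
  getVert_home : ∀ x ∈ P.support, P.getVert (home x) = x
  pos : ∀ x ∉ P.support, 0 < home x
  lt_length : ∀ x ∉ P.support, home x < P.length
  adj_iff : ∀ x ∉ P.support, ∀ z, G.Adj x z ↔ z = P.getVert (home x)

lemma IsAcyclic.exists_isSpineAnchor (hG : G.IsAcyclic)
    (hcat : ∀ x, x ∈ P.support ∨ ∃ y ∈ P.support, y ≠ u ∧ y ≠ v ∧ G.Adj x y) :
    ∃ home, IsSpineAnchor P home := by
  have hcat' : ∀ x, x ∈ P.support ∨ ∃ y ∈ P.support, G.Adj x y :=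
    fun x ↦ (hcat x).imp_right fun ⟨y, hy, _, _, hxy⟩ ↦ ⟨y, hy, hxy⟩
  have : ∀ x, ∃ i ≤ P.length, (x ∈ P.support → P.getVert i = x) ∧
      (x ∉ P.support → 0 < i ∧ i < P.length ∧ ∀ z, G.Adj x z ↔ z = P.getVert i) := by
    intro x
    by_cases hx : x ∈ P.support
    · obtain ⟨i, rfl, hi⟩ := Walk.mem_support_iff_exists_getVert.1 hx
      exact ⟨i, hi, fun _ ↦ rfl, fun h ↦ absurd hx h⟩
    obtain ⟨y, hy, hyu, hyv, hxy⟩ := (hcat x).resolve_left hx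
    obtain ⟨i, rfl, hi⟩ := Walk.mem_support_iff_exists_getVert.1 hy
    refine ⟨i, hi, fun h ↦ absurd h hx, fun _ ↦ ⟨?_, ?_, fun z ↦ ⟨fun hxz ↦ ?_, ?_⟩⟩⟩
    · exact Nat.pos_of_ne_zero fun h ↦ hyu (by simp [h])
    · exact lt_of_le_of_ne hi fun h ↦ hyv (by simp [h])
    · exact hG.eq_of_adj_of_notMem_support_of_mem_support hcat' hx hy hxy hxz
    · rintro rfl; exact hxy
  choose home hle hspine hleaf using this
  exact ⟨home, hle, hspine, fun x hx ↦ (hleaf x hx).1, fun x hx ↦ (hleaf x hx).2.1,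
    fun x hx ↦ (hleaf x hx).2.2⟩

variable {home : V → ℕ}

lemma IsSpineAnchor.home_getVert (hh : IsSpineAnchor P home) (hP : P.IsPath) {i : ℕ}
    (hi : i ≤ P.length) : home (P.getVert i) = i :=
  hP.getVert_injOn (Set.mem_ofPred.2 (hh.le_length _)) (Set.mem_ofPred.2 hi)
    (hh.getVert_home _ (P.getVert_mem_support i))

lemma IsSpineAnchor.exists_adj (hh : IsSpineAnchor P home) (hk : 0 < P.length) (x : V) :
    ∃ y, G.Adj x y := by
  by_cases hx : x ∈ P.support
  · rw [← hh.getVert_home x hx]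
    rcases (hh.le_length x).lt_or_eq with h | h
    · exact ⟨_, P.adj_getVert_succ h⟩
    · have := P.adj_getVert_succ (i := P.length - 1) (by omega)
      rw [Nat.sub_add_cancel hk] at this
      exact ⟨_, h ▸ this.symm⟩
  · exact ⟨_, (hh.adj_iff x hx _).2 rfl⟩

open Classical in
noncomputable def Walk.leavesAt [Fintype V] (P : G.Walk u v) (home : V → ℕ) (i : ℕ) :
    Finset V :=
  {x | x ∉ P.support ∧ home x = i}

end Spine

end SimpleGraph

namespace Caterpillar

open SimpleGraph

section CyclicOrder

variable {n : ℕ}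

def cwDist (x z : Fin n) : ℕ := if x ≤ z then (z : ℕ) - x else (z : ℕ) + n - x

@[simp] lemma cwDist_self (x : Fin n) : cwDist x x = 0 := by simp [cwDist]

lemma cwDist_injective (x : Fin n) : Function.Injective (cwDist x) := by
  intro z₁ z₂ h
  have := z₁.isLt; have := z₂.isLt; have := x.isLt
  unfold cwDist at h
  split_ifs at h <;> simp only [Fin.le_def, not_le] at * <;> omega

lemma cycBetween_iff_cwDist_lt {x y z : Fin n} (hxy : x ≠ y) (hzx : z ≠ x) :
    cycBetween x y z ↔ cwDist x z < cwDist x y := by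
  have := z.isLt; have := y.isLt
  rw [ne_eq, Fin.ext_iff] at hxy hzx
  unfold cycBetween cwDist
  split_ifs <;> simp only [Fin.lt_def, Fin.le_def, not_le] at * <;> omega

lemma cycBetween_swap_iff_cwDist_lt (x y z : Fin n) :
    cycBetween y x z ↔ cwDist x y < cwDist x z := by
  have := z.isLt; have := y.isLt; have := x.isLt
  unfold cycBetween cwDist
  split_ifs <;> simp only [Fin.lt_def, Fin.le_def, not_le] at * <;> omega

lemma not_cycBetween_left (x y : Fin n) : ¬ cycBetween x y x := by
  unfold cycBetween; split_ifs <;> simp_all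

/-- The side of the final arc `x y` (with `x` the image of the final vertex) on which an
embedding of a caterpillar with `k` spine edges must lie. -/
def OnImageSide (k : ℕ) (x y w : Fin n) : Prop :=
  if k % 2 = 0 then ¬ cycBetween x y w else w = x ∨ w = y ∨ cycBetween x y w

/-- The sign flip for odd `k` turns `OnImageSide` into an upper set (`onImageSide_iff`). -/
def sideRank (k : ℕ) (x w : Fin n) : ℤ := if k % 2 = 0 then cwDist x w else -(cwDist x w : ℤ)

lemma sideRank_injective (k : ℕ) (x : Fin n) : Function.Injective (sideRank k x) := by
  intro z₁ z₂ h
  apply cwDist_injective x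
  unfold sideRank at h
  split_ifs at h <;> omega

lemma onImageSide_iff {k : ℕ} {x y w : Fin n} (hxy : x ≠ y) :
    OnImageSide k x y w ↔ w = x ∨ sideRank k x y ≤ sideRank k x w := by
  rcases eq_or_ne w x with rfl | hwx
  · simp [OnImageSide, not_cycBetween_left]
  rcases eq_or_ne w y with rfl | hwy
  · simp [OnImageSide, cycBetween_iff_cwDist_lt hxy hwx]
  have : cwDist x w ≠ cwDist x y := fun h ↦ hwy (cwDist_injective x h)
  simp only [OnImageSide, sideRank, cycBetween_iff_cwDist_lt hxy hwx, hwx, hwy, false_or]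
  split_ifs <;> omega

lemma onImageSide_succ_iff {k : ℕ} {x y w : Fin n} :
    OnImageSide (k + 1) y x w ↔ w = x ∨ sideRank k x y ≤ sideRank k x w := by
  rcases eq_or_ne w y with rfl | hwy
  · simp [OnImageSide, not_cycBetween_left]
  simp only [OnImageSide, sideRank, cycBetween_swap_iff_cwDist_lt]
  rcases eq_or_ne w x with rfl | hwx
  · simp
  have : cwDist x w ≠ cwDist x y := fun h ↦ hwy (cwDist_injective x h)
  split_ifs <;> simp_all <;> omega

end CyclicOrder

section Model

open Function

variable {n : ℕ} {A : Fin n → Fin n → Bool} {c : Bool} {ℓ : ℕ → ℕ} {k : ℕ} {g : ℕ → Fin n}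
  {L : ℕ → Finset (Fin n)}

/-- Whether spine vertex `i` of an antidirected caterpillar is an out-vertex, when spine
vertex `0` is one iff `c`. -/
def spinePol (c : Bool) (i : ℕ) : Bool := if i % 2 = 0 then c else !c

@[simp] lemma spinePol_zero (c : Bool) : spinePol c 0 = c := rfl

@[simp] lemma spinePol_succ (c : Bool) (i : ℕ) : spinePol c (i + 1) = !spinePol c i := by
  unfold spinePol; split_ifs <;> simp <;> omega

@[simp] lemma spinePol_not (c : Bool) (i : ℕ) : spinePol (!c) i = !spinePol c i := by
  unfold spinePol; split_ifs <;> simp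

def orient {α : Type*} (c : Bool) (x y : α) : α × α := if c then (x, y) else (y, x)

@[simp] lemma orient_true {α : Type*} (x y : α) : orient true x y = (x, y) := rfl

@[simp] lemma orient_false {α : Type*} (x y : α) : orient false x y = (y, x) := rfl

@[simp] lemma orient_not {α : Type*} (c : Bool) (x y : α) :
    orient (!c) x y = (orient c x y).swap := by
  cases c <;> rfl

def IsArc {V : Type*} (A : V → V → Bool) (pq : V × V) : Prop := A pq.1 pq.2

@[simp] lemma isArc_iff {V : Type*} {A : V → V → Bool} {pq : V × V} :
    IsArc A pq ↔ A pq.1 pq.2 := Iff.rfl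

@[simp] lemma isArc_flip_swap {V : Type*} (A : V → V → Bool) (pq : V × V) :
    IsArc (flip A) pq.swap ↔ IsArc A pq := Iff.rfl

/-- `g` and `L` embed in `A` the antidirected caterpillar with spine `0, 1, …, k`, whose spine
vertex `i` carries `ℓ i` leaves and is an out-vertex iff `spinePol c i`. -/
structure IsModel (A : Fin n → Fin n → Bool) (c : Bool) (ℓ : ℕ → ℕ) (k : ℕ)
    (g : ℕ → Fin n) (L : ℕ → Finset (Fin n)) : Prop where
  injOn : Set.InjOn g (Set.Iic k)
  card_leaves : ∀ i ≤ k, #(L i) = ℓ i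
  notMem_leaves : ∀ i ≤ k, ∀ j ≤ k, g i ∉ L j
  pairwiseDisjoint : (Set.Iic k).PairwiseDisjoint L
  spine_isArc : ∀ i < k, IsArc A (orient (spinePol c i) (g i) (g (i + 1)))
  leaf_isArc : ∀ i ≤ k, ∀ z ∈ L i, IsArc A (orient (spinePol c i) (g i) z)

lemma IsModel.flip (h : IsModel A c ℓ k g L) : IsModel (flip A) (!c) ℓ k g L where
  __ := h
  spine_isArc i hi := by
    simpa only [spinePol_not, orient_not, isArc_flip_swap] using h.spine_isArc i hi
  leaf_isArc i hi z hz := by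
    simpa only [spinePol_not, orient_not, isArc_flip_swap] using h.leaf_isArc i hi z hz

def modelImage (g : ℕ → Fin n) (L : ℕ → Finset (Fin n)) (k : ℕ) : Set (Fin n) :=
  g '' Set.Iic k ∪ ⋃ i ∈ Set.Iic k, (L i : Set (Fin n))

/-- The model counterpart of `GoodArc`. -/
def IsGoodArc (A : Fin n → Fin n → Bool) (c : Bool) (ℓ : ℕ → ℕ) (k : ℕ)
    (pq : Fin n × Fin n) : Prop :=
  ∃ g L, IsModel A c ℓ k g L ∧ pq = orient (spinePol c (k - 1)) (g (k - 1)) (g k) ∧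
    ∀ w ∈ modelImage g L k, OnImageSide k (g k) (g (k - 1)) w

lemma IsGoodArc.flip {pq : Fin n × Fin n} (h : IsGoodArc A c ℓ k pq) :
    IsGoodArc (flip A) (!c) ℓ k pq.swap := by
  obtain ⟨g, L, hm, rfl, hside⟩ := h
  exact ⟨g, L, hm.flip, by simp, hside⟩

open Classical in
noncomputable def goodArcs (A : Fin n → Fin n → Bool) (c : Bool) (ℓ : ℕ → ℕ) (k : ℕ) :
    Finset (Fin n × Fin n) :=
  {pq | IsArc A pq ∧ IsGoodArc A c ℓ k pq}

lemma card_goodArcs_flip (A : Fin n → Fin n → Bool) (c : Bool) (ℓ : ℕ → ℕ) (k : ℕ) :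
    #(goodArcs (flip A) (!c) ℓ k) = #(goodArcs A c ℓ k) := by
  refine (card_nbij' Prod.swap Prod.swap ?_ ?_ (fun _ _ ↦ rfl) (fun _ _ ↦ rfl)).symm
  · intro pq hpq
    simp only [goodArcs, coe_filter, mem_univ, true_and, Set.mem_ofPred_eq] at hpq ⊢
    exact ⟨hpq.1, hpq.2.flip⟩
  · intro pq hpq
    simp only [goodArcs, coe_filter, mem_univ, true_and, Set.mem_ofPred_eq] at hpq ⊢
    exact ⟨hpq.1, by simpa using hpq.2.flip⟩

lemma apply_mem_modelImage {i : ℕ} (hi : i ≤ k) : g i ∈ modelImage g L k :=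
  Or.inl ⟨i, hi, rfl⟩

lemma mem_modelImage_of_mem {i : ℕ} {z : Fin n} (hi : i ≤ k) (hz : z ∈ L i) :
    z ∈ modelImage g L k :=
  Or.inr (Set.mem_biUnion (x := i) hi hz)

lemma mem_modelImage_iff {z : Fin n} :
    z ∈ modelImage g L k ↔ (∃ i ≤ k, g i = z) ∨ ∃ i ≤ k, z ∈ L i := by
  simp [modelImage]

lemma IsModel.extend {y : Fin n} {S : Finset (Fin n)}
    (hm : IsModel A c (update ℓ k 0) k g L) (hpol : spinePol c k = true) (hℓ : ℓ (k + 1) = 0)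
    (hy : A (g k) y) (hS : ∀ s ∈ S, A (g k) s) (hcard : #S = ℓ k) (hyS : y ∉ S)
    (hy_img : y ∉ modelImage g L k) (hS_img : ∀ s ∈ S, s ∉ modelImage g L k) :
    IsModel A c ℓ (k + 1) (update g (k + 1) y) (update (update L k S) (k + 1) ∅) := by
  set g' := update g (k + 1) y
  set L' := update (update L k S) (k + 1) ∅
  have hg'_last : g' (k + 1) = y := update_self ..
  have hg' : ∀ i ≤ k, g' i = g i := fun i hi ↦ update_of_ne (by omega) ..
  have hL'_last : L' (k + 1) = ∅ := update_self ..
  have hL'_k : L' k = S := by simp [L']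
  have hL' : ∀ i < k, L' i = L i := fun i hi ↦ by
    simp [L', update_of_ne (show i ≠ k + 1 by omega), update_of_ne (show i ≠ k by omega)]
  constructor
  case injOn => exact hm.injOn.update_Iic_succ fun i hi h ↦ hy_img (h ▸ apply_mem_modelImage hi)
  case pairwiseDisjoint =>
    exact hm.pairwiseDisjoint.update_Iic_succ fun i hi ↦ disjoint_left.2 fun z hzL hzS ↦
      hS_img z hzS (mem_modelImage_of_mem hi.le hzL)
  case card_leaves =>
    intro i hi
    rcases Nat.lt_trichotomy i k with hik | rfl | hik
    · rw [hL' i hik, hm.card_leaves i hik.le, update_of_ne hik.ne]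
    · rw [hL'_k, hcard]
    · obtain rfl : i = k + 1 := by omega
      rw [hL'_last, hℓ, card_empty]
  case notMem_leaves =>
    intro i hi j hj
    rcases Nat.lt_trichotomy j k with hjk | rfl | hjk
    · rw [hL' j hjk]
      rcases Nat.le_succ_iff.1 hi with hi | rfl
      · exact hg' i hi ▸ hm.notMem_leaves i hi j hjk.le
      · exact fun h ↦ hy_img (hg'_last ▸ mem_modelImage_of_mem hjk.le h)
    · rw [hL'_k]
      rcases Nat.le_succ_iff.1 hi with hi | rfl
      · exact fun h ↦ hS_img _ h (hg' i hi ▸ apply_mem_modelImage hi)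
      · exact hg'_last ▸ hyS
    · obtain rfl : j = k + 1 := by omega
      simp [hL'_last]
  case spine_isArc =>
    intro i hi
    rcases Nat.lt_succ_iff_lt_or_eq.1 hi with hi | rfl
    · rw [hg' i hi.le, hg' (i + 1) hi]
      exact hm.spine_isArc i hi
    · rw [hg' i le_rfl, hg'_last, hpol]
      exact hy
  case leaf_isArc =>
    intro i hi z hz
    rcases Nat.lt_trichotomy i k with hik | rfl | hik
    · rw [hg' i hik.le]
      exact hm.leaf_isArc i hik.le z (hL' i hik ▸ hz)
    · rw [hg' i le_rfl, hpol]
      exact hS z (hL'_k ▸ hz)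
    · obtain rfl : i = k + 1 := by omega
      simp [hL'_last] at hz

lemma modelImage_extend_subset {y : Fin n} {S : Finset (Fin n)} :
    modelImage (update g (k + 1) y) (update (update L k S) (k + 1) ∅) (k + 1) ⊆
      insert y (S ∪ modelImage g L k) := by
  intro z hz
  rcases mem_modelImage_iff.1 hz with ⟨i, hi, rfl⟩ | ⟨i, hi, hz⟩
  · rcases Nat.le_succ_iff.1 hi with hi | rfl
    · simp [update_of_ne (show i ≠ k + 1 by omega), apply_mem_modelImage hi]
    · simp
  · rcases Nat.lt_trichotomy i k with hik | rfl | hik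
    · simp only [update_of_ne (show i ≠ k + 1 by omega), update_of_ne hik.ne] at hz
      simp [mem_modelImage_of_mem hik.le hz]
    · simp only [update_of_ne (show i ≠ i + 1 by omega), update_self] at hz
      simp [hz]
    · obtain rfl : i = k + 1 := by omega
      simp at hz

lemma IsGoodArc.extend {x y z : Fin n} {S : Finset (Fin n)} (hA : Loopless A) (hk : 1 ≤ k)
    (hpol : spinePol c k = true) (hℓ : ℓ (k + 1) = 0)
    (hxz : IsGoodArc A c (update ℓ k 0) k (x, z)) (hxy : A x y) (hS : ∀ s ∈ S, A x s)
    (hcard : #S = ℓ k) (hyz : sideRank k x y < sideRank k x z)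
    (hS_between : ∀ s ∈ S,
      sideRank k x y < sideRank k x s ∧ sideRank k x s < sideRank k x z) :
    IsGoodArc A c ℓ (k + 1) (x, y) := by
  obtain ⟨g, L, hm, hpq, hside⟩ := hxz
  have hpol' : spinePol c (k - 1) = false := by
    simpa [Nat.sub_add_cancel hk, hpol] using spinePol_succ c (k - 1)
  obtain ⟨rfl, rfl⟩ : g k = x ∧ g (k - 1) = z := by simpa [hpol'] using hpq.symm
  have hne : g k ≠ g (k - 1) := fun h ↦ by
    have := hm.injOn (Set.mem_Iic.2 le_rfl) (Set.mem_Iic.2 (Nat.sub_le k 1)) h; omega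
  -- the old embedding lies on the far side of `z`, while `y` and `S` lie on the near side
  have hold : ∀ w ∈ modelImage g L k,
      w = g k ∨ sideRank k (g k) (g (k - 1)) ≤ sideRank k (g k) w :=
    fun w hw ↦ (onImageSide_iff hne).1 (hside w hw)
  have hloop : ∀ w, A (g k) w → w ≠ g k := fun w hw h ↦ hA w (h ▸ hw)
  have hy_img : y ∉ modelImage g L k := fun hy ↦ by
    rcases hold y hy with h | h
    · exact hloop y hxy h
    · exact hyz.not_ge h
  have hS_img : ∀ s ∈ S, s ∉ modelImage g L k := fun s hs hs_img ↦ by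
    rcases hold s hs_img with h | h
    · exact hloop s (hS s hs) h
    · exact (hS_between s hs).2.not_ge h
  have hyS : y ∉ S := fun hy ↦ (hS_between y hy).1.false
  refine ⟨_, _, hm.extend hpol hℓ hxy hS hcard hyS hy_img hS_img, by simp [hpol], ?_⟩
  intro w hw
  simp only [Nat.add_sub_cancel, update_self,
    update_of_ne (show k ≠ k + 1 by omega)]
  refine onImageSide_succ_iff.2 ?_
  rcases modelImage_extend_subset hw with rfl | hw | hw
  · exact Or.inr le_rfl
  · exact Or.inr (hS_between w hw).1.le
  · rcases hold w hw with h | h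
    · exact Or.inl h
    · exact Or.inr (hyz.le.trans h)

open Classical in
lemma card_filter_isArc_eq_sum {V : Type*} [Fintype V] (A : V → V → Bool)
    (P : V × V → Prop) :
    #{pq | IsArc A pq ∧ P pq} = ∑ x, #{y ∈ outNbr A x | P (x, y)} := by
  rw [card_eq_sum_card_fiberwise (f := Prod.fst) (t := univ) (fun _ _ ↦ mem_univ _)]
  refine sum_congr rfl fun x _ ↦ card_nbij' Prod.snd (Prod.mk x) ?_ ?_ ?_ (fun _ _ ↦ rfl)
  · intro pq hpq
    simp only [coe_filter, mem_filter, mem_univ, true_and, Set.mem_ofPred_eq] at hpq ⊢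
    obtain ⟨⟨harc, hP⟩, rfl⟩ := hpq
    exact ⟨by simpa using harc, hP⟩
  · intro y hy
    simpa using hy
  · intro pq hpq
    simp only [coe_filter, mem_filter, mem_univ, true_and, Set.mem_ofPred_eq] at hpq
    exact Prod.ext hpq.2.symm rfl

open Classical in
lemma card_filter_isGoodArc_le (hA : Loopless A) (hk : 1 ≤ k) (hpol : spinePol c k = true)
    (hℓ : ℓ (k + 1) = 0) (x : Fin n) :
    #{y ∈ outNbr A x | IsGoodArc A c (update ℓ k 0) k (x, y)} ≤
      #{y ∈ outNbr A x | IsGoodArc A c ℓ (k + 1) (x, y)} + (ℓ k + 1) := by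
  refine card_le_card_add_of_forall_between (sideRank_injective k x).injOn (filter_subset _ _)
    (ℓ k) fun z hz y hy hyz hcard ↦ ?_
  obtain ⟨S, hS, hScard⟩ := exists_subset_card_eq hcard
  have hS' : ∀ s ∈ S,
      A x s ∧ sideRank k x y < sideRank k x s ∧ sideRank k x s < sideRank k x z :=
    fun s hs ↦ by simpa using hS hs
  refine mem_filter.2 ⟨hy, (mem_filter.1 hz).2.extend hA hk hpol hℓ (by simpa using hy)
    (fun s hs ↦ (hS' s hs).1) hScard hyz (fun s hs ↦ (hS' s hs).2)⟩

lemma card_goodArcs_le (hA : Loopless A) (hk : 1 ≤ k) (hpol : spinePol c k = true)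
    (hℓ : ℓ (k + 1) = 0) :
    #(goodArcs A c (update ℓ k 0) k) ≤
      #(goodArcs A c ℓ (k + 1)) + (ℓ k + 1) * #(outVerts A) := by
  classical
  simp only [goodArcs, card_filter_isArc_eq_sum]
  calc ∑ x, #{y ∈ outNbr A x | IsGoodArc A c (update ℓ k 0) k (x, y)}
      ≤ ∑ x, (#{y ∈ outNbr A x | IsGoodArc A c ℓ (k + 1) (x, y)} +
          if x ∈ outVerts A then ℓ k + 1 else 0) := by
        refine sum_le_sum fun x _ ↦ ?_
        split_ifs with hx
        · exact card_filter_isGoodArc_le hA hk hpol hℓ x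
        · simp [outNbr_eq_empty hx]
    _ = _ := by rw [sum_add_distrib, sum_ite_mem, univ_inter, sum_const, smul_eq_mul, mul_comm]

/-- The number of out-vertices (if `b`) or in-vertices (if `¬ b`) of the model caterpillar. -/
def countPol (c : Bool) (ℓ : ℕ → ℕ) (k : ℕ) (b : Bool) : ℕ :=
  ∑ i ∈ range (k + 1), if spinePol c i = b then 1 else ℓ i

lemma countPol_not (c : Bool) (ℓ : ℕ → ℕ) (k : ℕ) (b : Bool) :
    countPol (!c) ℓ k b = countPol c ℓ k (!b) := by
  simp only [countPol, spinePol_not, Bool.not_eq_eq_eq_not]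

lemma sum_range_ite_update (c : Bool) (ℓ : ℕ → ℕ) (k : ℕ) (b : Bool) :
    ∑ i ∈ range k, (if spinePol c i = b then 1 else update ℓ k 0 i) =
      ∑ i ∈ range k, (if spinePol c i = b then 1 else ℓ i) :=
  sum_congr rfl fun i hi ↦ by rw [update_of_ne (mem_range.1 hi).ne]

lemma countPol_succ_true (hpol : spinePol c k = true) (hℓ : ℓ (k + 1) = 0) :
    countPol c ℓ (k + 1) true = countPol c (update ℓ k 0) k true := by
  simp [countPol, sum_range_succ _ (k + 1), sum_range_succ _ k, hpol, hℓ, sum_range_ite_update]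

lemma countPol_succ_false (hpol : spinePol c k = true) :
    countPol c ℓ (k + 1) false = countPol c (update ℓ k 0) k false + (ℓ k + 1) := by
  simp [countPol, sum_range_succ _ (k + 1), sum_range_succ _ k, hpol, sum_range_ite_update]
  ring

lemma one_le_countPol (hk : 1 ≤ k) (b : Bool) : 1 ≤ countPol c ℓ k b := by
  obtain ⟨i, hi, hpol⟩ : ∃ i ≤ 1, spinePol c i = b := by
    by_cases h : spinePol c 0 = b
    · exact ⟨0, zero_le_one, h⟩
    · exact ⟨1, le_rfl, by cases b <;> simp_all⟩
  calc 1 = if spinePol c i = b then 1 else ℓ i := by rw [if_pos hpol]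
    _ ≤ countPol c ℓ k b :=
      single_le_sum (f := fun i ↦ if spinePol c i = b then 1 else ℓ i)
        (fun _ _ ↦ Nat.zero_le _) (mem_range.2 (by omega))

lemma isGoodArc_one (hA : Loopless A) (hℓ0 : ℓ 0 = 0) (hℓ1 : ℓ 1 = 0) {pq : Fin n × Fin n}
    (hpq : IsArc A pq) : IsGoodArc A c ℓ 1 pq := by
  set g : ℕ → Fin n := fun i ↦
    if i = 0 then (orient c pq.1 pq.2).1 else (orient c pq.1 pq.2).2
  have horient : orient c (g 0) (g 1) = pq := by cases c <;> rfl
  have hne : g 0 ≠ g 1 := fun h ↦ hA pq.1 (by cases c <;> simp_all [g, orient])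
  have hdisj : (Set.Iic 1).PairwiseDisjoint fun _ ↦ (∅ : Finset (Fin n)) := by
    simp [Set.PairwiseDisjoint, Set.Pairwise, onFun]
  refine ⟨g, fun _ ↦ ∅, ⟨?_, ?_, by simp, hdisj, ?_, by simp⟩, by simpa using horient.symm, ?_⟩
  · intro i hi j hj hij
    simp only [Set.mem_Iic] at hi hj
    interval_cases i <;> interval_cases j <;>
      first | rfl | exact absurd hij (by simpa [eq_comm] using hne)
  · intro i hi
    interval_cases i <;> simp [hℓ0, hℓ1]
  · intro i hi
    obtain rfl : i = 0 := by omega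
    simpa [horient] using hpq
  · intro w hw
    obtain ⟨i, hi, rfl⟩ : ∃ i ≤ 1, g i = w := by simpa [mem_modelImage_iff] using hw
    interval_cases i <;> simp [OnImageSide]

lemma card_goodArcs_one (hA : Loopless A) (hℓ0 : ℓ 0 = 0) (hℓ1 : ℓ 1 = 0) :
    arcCount A ≤ #(goodArcs A c ℓ 1) := by
  classical
  refine card_le_card fun pq hpq ↦ ?_
  simp only [goodArcs, mem_filter, mem_univ, true_and] at hpq ⊢
  exact ⟨hpq, isGoodArc_one hA hℓ0 hℓ1 hpq⟩

lemma card_goodArcs_ge_succ (hA : Loopless A) (hk : 1 ≤ k) (hpol : spinePol c k = true)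
    (hℓ : ℓ (k + 1) = 0)
    (ih : arcCount A - (countPol c (update ℓ k 0) k true - 1) * #(inVerts A)
      - (countPol c (update ℓ k 0) k false - 1) * #(outVerts A) ≤
        #(goodArcs A c (update ℓ k 0) k)) :
    arcCount A - (countPol c ℓ (k + 1) true - 1) * #(inVerts A)
      - (countPol c ℓ (k + 1) false - 1) * #(outVerts A) ≤ #(goodArcs A c ℓ (k + 1)) := by
  have hstep := card_goodArcs_le hA hk hpol hℓ
  have hpos := one_le_countPol (c := c) (ℓ := update ℓ k 0) hk false
  rw [countPol_succ_true hpol hℓ, countPol_succ_false hpol,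
    show countPol c (update ℓ k 0) k false + (ℓ k + 1) - 1 =
      countPol c (update ℓ k 0) k false - 1 + (ℓ k + 1) by omega, add_mul]
  omega

theorem card_goodArcs_ge (hA : Loopless A) (hk : 1 ≤ k) (hℓ0 : ℓ 0 = 0) (hℓk : ℓ k = 0) :
    arcCount A - (countPol c ℓ k true - 1) * #(inVerts A)
      - (countPol c ℓ k false - 1) * #(outVerts A) ≤ #(goodArcs A c ℓ k) := by
  induction k, hk using Nat.le_induction generalizing A c ℓ with
  | base =>
    have h : ∀ b, countPol c ℓ 1 b = 1 := fun b ↦ by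
      cases c <;> cases b <;> simp [countPol, sum_range_succ, hℓ0, hℓk]
    simpa [h] using card_goodArcs_one hA hℓ0 hℓk
  | succ k hk ih =>
    have hℓ0' : update ℓ k 0 0 = 0 := by
      simp [update_of_ne (show 0 ≠ k by omega), hℓ0]
    cases hpol : spinePol c k
    -- reversing every arc makes spine vertex `k` an out-vertex
    · have := card_goodArcs_ge_succ (A := flip A) (c := !c) (fun v ↦ hA v) hk (by simp [hpol])
        hℓk (ih (fun v ↦ hA v) hℓ0' (by simp))
      simp only [countPol_not, card_goodArcs_flip, arcCount_flip, Bool.not_true,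
        Bool.not_false] at this
      exact (Nat.sub_right_comm ..).trans_le this
    · exact card_goodArcs_ge_succ hA hk hpol hℓk (ih hA hℓ0' (by simp))

end Model

section Transfer

variable {W : Type*} {T : W → W → Bool} {w u : W} {P : (underG T).Walk w u} {home : W → ℕ}
  {c : Bool} {n : ℕ} {A : Fin n → Fin n → Bool} {ℓ : ℕ → ℕ} {g : ℕ → Fin n}
  {L : ℕ → Finset (Fin n)} {e : ℕ → W → Fin n}

open Classical in
noncomputable def liftModel (P : (underG T).Walk w u) (home : W → ℕ) (g : ℕ → Fin n)
    (e : ℕ → W → Fin n) (x : W) : Fin n :=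
  if x ∈ P.support then g (home x) else e (home x) x

lemma liftModel_of_mem {x : W} (hx : x ∈ P.support) : liftModel P home g e x = g (home x) :=
  if_pos hx

lemma liftModel_of_notMem {x : W} (hx : x ∉ P.support) :
    liftModel P home g e x = e (home x) x :=
  if_neg hx

variable [Fintype W]

lemma mem_outVerts_getVert_iff (hT : Antidirected T) (hc : w ∈ outVerts T ↔ c = true)
    {i : ℕ} (hi : i ≤ P.length) : P.getVert i ∈ outVerts T ↔ spinePol c i = true := by
  induction i with
  | zero => simpa using hc
  | succ i ih =>
    rw [hT.mem_outVerts_iff_notMem (P.adj_getVert_succ (by omega)).symm, ih (by omega)]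
    simp

lemma mem_outVerts_iff_of_mem_support (hT : Antidirected T) (hc : w ∈ outVerts T ↔ c = true)
    (hh : IsSpineAnchor P home) {x : W} (hx : x ∈ P.support) :
    x ∈ outVerts T ↔ spinePol c (home x) = true := by
  conv_lhs => rw [← hh.getVert_home x hx]
  exact mem_outVerts_getVert_iff hT hc (hh.le_length x)

lemma mem_outVerts_iff_of_notMem_support (hT : Antidirected T) (hc : w ∈ outVerts T ↔ c = true)
    (hh : IsSpineAnchor P home) {x : W} (hx : x ∉ P.support) :
    x ∈ outVerts T ↔ spinePol c (home x) = false := by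
  rw [hT.mem_outVerts_iff_notMem ((hh.adj_iff x hx _).2 rfl),
    mem_outVerts_getVert_iff hT hc (hh.le_length x), Bool.not_eq_true]

def polVerts (T : W → W → Bool) (b : Bool) : Finset W := if b then outVerts T else inVerts T

lemma mem_polVerts_iff (hT : Antidirected T) {x y : W} (hxy : (underG T).Adj x y)
    (b : Bool) : x ∈ polVerts T b ↔ (x ∈ outVerts T ↔ b = true) := by
  cases b <;> simp [polVerts, hT.mem_inVerts_iff_notMem hxy]

lemma filter_polVerts_home_eq (hT : Antidirected T) (hc : w ∈ outVerts T ↔ c = true)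
    (hP : P.IsPath) (hh : IsSpineAnchor P home) (hk : 0 < P.length) {i : ℕ} (hi : i ≤ P.length)
    (b : Bool) :
    {x ∈ polVerts T b | home x = i} =
      if spinePol c i = b then {P.getVert i} else P.leavesAt home i := by
  ext x
  obtain ⟨y, hxy⟩ := hh.exists_adj hk x
  rw [mem_filter, mem_polVerts_iff hT hxy]
  by_cases hx : x ∈ P.support
  · have hxi : x = P.getVert i ↔ home x = i :=
      ⟨fun h ↦ h ▸ hh.home_getVert hP hi, fun h ↦ h ▸ (hh.getVert_home x hx).symm⟩
    rw [mem_outVerts_iff_of_mem_support hT hc hh hx, ← Bool.eq_iff_iff]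
    split_ifs with hpol
    · rw [mem_singleton, hxi]
      exact ⟨And.right, fun h ↦ ⟨h ▸ hpol, h⟩⟩
    · exact iff_of_false (fun h ↦ hpol (h.2 ▸ h.1)) (by simp [Walk.leavesAt, hx])
  · have hsupp : x ≠ P.getVert i := fun h ↦ hx (h ▸ P.getVert_mem_support i)
    rw [mem_outVerts_iff_of_notMem_support hT hc hh hx]
    split_ifs with hpol
    · refine iff_of_false ?_ (by simpa using hsupp)
      rintro ⟨h, rfl⟩
      revert h hpol; cases spinePol c (home x) <;> cases b <;> simp
    · simp only [Walk.leavesAt, mem_filter, mem_univ, hx, not_false_eq_true, true_and]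
      refine ⟨And.right, fun h ↦ ⟨?_, h⟩⟩
      subst h; revert hpol; cases spinePol c (home x) <;> cases b <;> simp

lemma card_polVerts (hT : Antidirected T) (hc : w ∈ outVerts T ↔ c = true) (hP : P.IsPath)
    (hh : IsSpineAnchor P home) (hk : 0 < P.length) (b : Bool) :
    #(polVerts T b) = countPol c (fun i ↦ #(P.leavesAt home i)) P.length b := by
  rw [card_eq_sum_card_fiberwise (f := home) (t := range (P.length + 1))
    fun x _ ↦ mem_range.2 (Nat.lt_succ_of_le (hh.le_length x))]
  refine sum_congr rfl fun i hi ↦ ?_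
  rw [filter_polVerts_home_eq hT hc hP hh hk (Nat.lt_succ_iff.1 (mem_range.1 hi)) b]
  split_ifs <;> simp

lemma mem_leavesAt_home {x : W} (hx : x ∉ P.support) : x ∈ P.leavesAt home (home x) := by
  simp [Walk.leavesAt, hx]

lemma liftModel_injective (hh : IsSpineAnchor P home)
    (hm : IsModel A c ℓ P.length g L)
    (he : ∀ i,
      Set.MapsTo (e i) (P.leavesAt home i) (L i) ∧ Set.InjOn (e i) (P.leavesAt home i)) :
    Function.Injective (liftModel P home g e) := by
  have hspine_leaf : ∀ x ∈ P.support, ∀ y ∉ P.support,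
      liftModel P home g e x ≠ liftModel P home g e y := fun x hx y hy h ↦ by
    rw [liftModel_of_mem hx, liftModel_of_notMem hy] at h
    exact hm.notMem_leaves _ (hh.le_length x) _ (hh.le_length y)
      (h ▸ (he _).1 (mem_leavesAt_home hy))
  intro x y hxy
  by_cases hx : x ∈ P.support <;> by_cases hy : y ∈ P.support
  · rw [liftModel_of_mem hx, liftModel_of_mem hy] at hxy
    have := hm.injOn (Set.mem_Iic.2 (hh.le_length x)) (Set.mem_Iic.2 (hh.le_length y)) hxy
    rw [← hh.getVert_home x hx, ← hh.getVert_home y hy, this]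
  · exact absurd hxy (hspine_leaf x hx y hy)
  · exact absurd hxy.symm (hspine_leaf y hy x hx)
  · rw [liftModel_of_notMem hx, liftModel_of_notMem hy] at hxy
    by_cases hxy' : home x = home y
    · rw [hxy'] at hxy
      exact (he _).2 (hxy' ▸ mem_leavesAt_home hx) (mem_leavesAt_home hy) hxy
    · exact (Finset.disjoint_left.1 (hm.pairwiseDisjoint (Set.mem_Iic.2 (hh.le_length x))
        (Set.mem_Iic.2 (hh.le_length y)) hxy') ((he _).1 (mem_leavesAt_home hx))
        (hxy ▸ (he _).1 (mem_leavesAt_home hy))).elim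

lemma isArc_liftModel (hT : Antidirected T) (hG : (underG T).IsAcyclic)
    (hc : w ∈ outVerts T ↔ c = true) (hP : P.IsPath) (hh : IsSpineAnchor P home)
    (hm : IsModel A c ℓ P.length g L) (he : ∀ i, Set.MapsTo (e i) (P.leavesAt home i) (L i))
    {x y : W} (hxy : T x y) : A (liftModel P home g e x) (liftModel P home g e y) := by
  have hadj : (underG T).Adj x y :=
    underG_adj_iff.2 ⟨fun h ↦ hT x x x (h ▸ hxy) (h ▸ hxy), Or.inl hxy⟩
  have hx_out : x ∈ outVerts T := (hT.apply_iff_mem_outVerts hadj).1 hxy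
  have hy_in : y ∉ outVerts T := (hT.mem_outVerts_iff_notMem hadj).1 hx_out
  by_cases hx : x ∈ P.support <;> by_cases hy : y ∈ P.support
  · rw [liftModel_of_mem hx, liftModel_of_mem hy]
    rw [mem_outVerts_iff_of_mem_support hT hc hh hx] at hx_out
    rw [mem_outVerts_iff_of_mem_support hT hc hh hy, Bool.not_eq_true] at hy_in
    rw [← hh.getVert_home x hx, ← hh.getVert_home y hy] at hadj
    have hx_le := hh.le_length x
    have hy_le := hh.le_length y
    rcases lt_or_gt_of_ne (fun h ↦ hadj.ne (congrArg P.getVert h)) with hlt | hlt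
    · have hsucc := hG.eq_add_one_of_adj_getVert hP hlt hy_le hadj
      simpa [hx_out, hsucc] using hm.spine_isArc (home x) (by omega)
    · have hsucc := hG.eq_add_one_of_adj_getVert hP hlt hx_le hadj.symm
      simpa [hy_in, hsucc] using hm.spine_isArc (home y) (by omega)
  · rw [liftModel_of_mem hx, liftModel_of_notMem hy]
    have hxy' : home x = home y := by
      rw [(hh.adj_iff y hy x).1 hadj.symm, hh.home_getVert hP (hh.le_length y)]
    rw [mem_outVerts_iff_of_mem_support hT hc hh hx, hxy'] at hx_out
    simpa [hx_out, hxy'] using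
      hm.leaf_isArc _ (hh.le_length y) _ (he _ (mem_leavesAt_home hy))
  · rw [liftModel_of_notMem hx, liftModel_of_mem hy]
    have hxy' : home y = home x := by
      rw [(hh.adj_iff x hx y).1 hadj, hh.home_getVert hP (hh.le_length x)]
    rw [mem_outVerts_iff_of_mem_support hT hc hh hy, hxy', Bool.not_eq_true] at hy_in
    simpa [hy_in, hxy'] using
      hm.leaf_isArc _ (hh.le_length x) _ (he _ (mem_leavesAt_home hx))
  · exact absurd ((hh.adj_iff x hx y).1 hadj ▸ P.getVert_mem_support _) hy

lemma liftModel_mem_modelImage (hh : IsSpineAnchor P home)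
    (he : ∀ i, Set.MapsTo (e i) (P.leavesAt home i) (L i)) (x : W) :
    liftModel P home g e x ∈ modelImage g L P.length := by
  by_cases hx : x ∈ P.support
  · exact liftModel_of_mem hx ▸ apply_mem_modelImage (hh.le_length x)
  · exact liftModel_of_notMem hx ▸ mem_modelImage_of_mem (hh.le_length x)
      (he _ (mem_leavesAt_home hx))

lemma card_leavesAt_eq_zero (hh : IsSpineAnchor P home) {i : ℕ} (hi : i = 0 ∨ P.length ≤ i) :
    #(P.leavesAt home i) = 0 := by
  classical
  rw [card_eq_zero, Walk.leavesAt, filter_eq_empty_iff]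
  rintro x - ⟨hx, rfl⟩
  have := hh.pos x hx
  have := hh.lt_length x hx
  omega

lemma exists_mapsTo_injOn_leavesAt (hh : IsSpineAnchor P home)
    (hm : IsModel A c (fun i ↦ #(P.leavesAt home i)) P.length g L) (i : ℕ) :
    ∃ e : W → Fin n,
      Set.MapsTo e (P.leavesAt home i) (L i) ∧ Set.InjOn e (P.leavesAt home i) := by
  have : Nonempty (Fin n) := ⟨g 0⟩
  have hcard : #(P.leavesAt home i) ≤ #(L i) := by
    by_cases hi : i ≤ P.length
    · exact (hm.card_leaves i hi).ge
    · simp [card_leavesAt_eq_zero hh (Or.inr (not_le.1 hi).le)]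
  refine (Finset.finite_toSet _).exists_injOn_of_encard_le (t := (L i : Set (Fin n))) ?_
  rw [Set.encard_coe_eq_coe_finsetCard, Set.encard_coe_eq_coe_finsetCard]
  exact_mod_cast hcard

lemma goodArc_of_isGoodArc (hT : Antidirected T) (hG : (underG T).IsAcyclic)
    (hc : w ∈ outVerts T ↔ c = true) (hP : P.IsPath) (hh : IsSpineAnchor P home)
    (hk : 0 < P.length) {pq : Fin n × Fin n}
    (h : IsGoodArc A c (fun i ↦ #(P.leavesAt home i)) P.length pq) :
    GoodArc A T u P.penultimate P.length pq := by
  obtain ⟨g, L, hm, rfl, hside⟩ := h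
  choose e he using exists_mapsTo_injOn_leavesAt hh hm
  have hfu : liftModel P home g e u = g P.length := by
    have := hh.home_getVert hP le_rfl
    rw [P.getVert_length] at this
    rw [liftModel_of_mem P.end_mem_support, this]
  have hfv : liftModel P home g e P.penultimate = g (P.length - 1) := by
    rw [liftModel_of_mem (P.getVert_mem_support _), hh.home_getVert hP (Nat.sub_le _ _)]
  have hvu : (underG T).Adj P.penultimate u := P.adj_penultimate (Walk.not_nil_iff_lt_length.2 hk)
  refine ⟨liftModel P home g e, liftModel_injective hh hm he,
    fun x y hxy ↦ isArc_liftModel hT hG hc hP hh hm (fun i ↦ (he i).1) hxy, ?_, ?_⟩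
  · have hv : P.penultimate ∈ outVerts T ↔ spinePol c (P.length - 1) = true :=
      mem_outVerts_getVert_iff hT hc (Nat.sub_le _ _)
    cases hpol : spinePol c (P.length - 1)
    · have hv_in : P.penultimate ∉ outVerts T := fun h ↦ by simpa [hpol] using hv.1 h
      refine Or.inr ⟨?_, by simp [hfu, hfv]⟩
      exact (hT.apply_iff_mem_outVerts hvu.symm).2 ((hT.mem_outVerts_iff_notMem hvu.symm).2 hv_in)
    · exact Or.inl ⟨(hT.apply_iff_mem_outVerts hvu).2 (hv.2 hpol), by simp [hfu, hfv]⟩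
  · intro z
    rw [hfu, hfv]
    have hz : z ∈ Set.range (liftModel P home g e) →
        OnImageSide P.length (g P.length) (g (P.length - 1)) z := by
      rintro ⟨x, rfl⟩
      exact hside _ (liftModel_mem_modelImage hh (fun i ↦ (he i).1) x)
    refine ⟨fun hpar hcyc hmem ↦ ?_, fun hpar hzu hzv hcyc hmem ↦ ?_⟩
    · simpa [OnImageSide, hpar, hcyc] using hz hmem
    · have := hz hmem
      simp [OnImageSide, hpar, hzu, hzv, hcyc] at this

lemma card_goodArcs_le_ncard (hT : Antidirected T) (hG : (underG T).IsAcyclic)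
    (hc : w ∈ outVerts T ↔ c = true) (hP : P.IsPath) (hh : IsSpineAnchor P home)
    (hk : 0 < P.length) (A : Fin n → Fin n → Bool) :
    #(goodArcs A c (fun i ↦ #(P.leavesAt home i)) P.length) ≤
      {pq : Fin n × Fin n | A pq.1 pq.2 ∧ GoodArc A T u P.penultimate P.length pq}.ncard := by
  rw [← Set.ncard_coe_finset]
  refine Set.ncard_le_ncard (fun pq hpq ↦ ?_) (Set.toFinite _)
  simp only [goodArcs, coe_filter, mem_univ, true_and, Set.mem_ofPred_eq, isArc_iff] at hpq
  exact ⟨hpq.1, goodArc_of_isGoodArc hT hG hc hP hh hk hpq.2⟩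

end Transfer

end Caterpillar

theorem stmt_8_general (n : ℕ)
    {W : Type*} [Fintype W]
    (T : W → W → Bool) (hT : Antidirected T)
    (htree : (underG T).IsTree)
    (w v u : W) (Q : (underG T).Walk w v) (hadj : (underG T).Adj v u)
    (hP : (Q.concat hadj).IsPath)
    (hcat : ∀ x : W, x ∈ (Q.concat hadj).support ∨
      ∃ y ∈ (Q.concat hadj).support, y ≠ w ∧ y ≠ u ∧ (underG T).Adj x y)
    (A : Fin n → Fin n → Bool) (hloop : Loopless A) :
    arcCount A - ((outVerts T).card - 1) * (inVerts A).card
        - ((inVerts T).card - 1) * (outVerts A).card ≤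
      {pq : Fin n × Fin n | A pq.1 pq.2 ∧
        GoodArc A T u v (Q.concat hadj).length pq}.ncard := by
  set P := Q.concat hadj
  have hk : 0 < P.length := by simp [P]
  obtain ⟨home, hh⟩ := htree.isAcyclic.exists_isSpineAnchor hcat
  have hc : w ∈ outVerts T ↔ decide (∃ y, T w y) = true := by simp [mem_outVerts_iff]
  have hout : #(outVerts T) = _ := Caterpillar.card_polVerts hT hc hP hh hk true
  have hin : #(inVerts T) = _ := Caterpillar.card_polVerts hT hc hP hh hk false
  rw [hout, hin]
  have hgood := Caterpillar.card_goodArcs_le_ncard hT htree.isAcyclic hc hP hh hk A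
  rw [SimpleGraph.Walk.penultimate_concat] at hgood
  refine le_trans ?_ hgood
  exact Caterpillar.card_goodArcs_ge hloop hk (Caterpillar.card_leavesAt_eq_zero hh (Or.inl rfl))
    (Caterpillar.card_leavesAt_eq_zero hh (Or.inr le_rfl))

/-- A convex digraph of order `n` contains at least
`a(D) − (|T⁺|−1)·|D⁻| − (|T⁻|−1)·|D⁺|` arcs that are good for a given antidirected
caterpillar `T` (given with its spine: the path `Q.concat hadj` ending with the final
edge between `v` and the final vertex `u`). -/
theorem stmt_8 (n : ℕ) (hn : 0 < n)
    {W : Type*} [Fintype W] [DecidableEq W]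
    (T : W → W → Bool) (hT : Antidirected T)
    (htree : (underG T).IsTree)
    (w v u : W) (Q : (underG T).Walk w v) (hadj : (underG T).Adj v u)
    (hP : (Q.concat hadj).IsPath)
    (hcat : ∀ x : W, x ∈ (Q.concat hadj).support ∨
      ∃ y ∈ (Q.concat hadj).support, y ≠ w ∧ y ≠ u ∧ (underG T).Adj x y)
    (A : Fin n → Fin n → Bool) (hloop : Loopless A) :
    arcCount A - ((outVerts T).card - 1) * (inVerts A).card
        - ((inVerts T).card - 1) * (outVerts A).card ≤
      {pq : Fin n × Fin n | A pq.1 pq.2 ∧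
        GoodArc A T u v (Q.concat hadj).length pq}.ncard :=
  stmt_8_general n T hT htree w v u Q hadj hP hcat A hloop
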